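/- arXiv:math-ph/0702093 — 2 statements merged into one kernel-verified Lean document; each statement's English description precedes it below -/
import Mathlib

section
/- Suppose V₀ ≥ 0 and V₀(x) → +∞ as |x| → ∞. Then for each j ∈ ℕ, the j-th eigenvalue ω_j(k) of h₀(k) = p_x² + (Bx-k)² + V₀(x) satisfies lim_{|k|→∞} ω_j(k) = +∞. -/
open MeasureTheory Filter

/-- `ω` is an eigenvalue of the fibered operator `h₀(k) = p_x² + (Bx-k)² + V₀(x)`. -/
def IsEigenvalue (B : ℝ) (V₀ : ℝ → ℝ) (k ω : ℝ) : Prop :=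
  ∃ φ : ℝ → ℝ, ContDiff ℝ 2 φ ∧ φ ≠ 0 ∧ Integrable (fun x => (φ x) ^ 2) ∧
    ∀ x, -(deriv (deriv φ) x) + ((B * x - k) ^ 2 + V₀ x) * φ x = ω * φ x

/-!
An eigenvalue `ω` of `-d²/dx² + W` must satisfy `W x < ω` somewhere: otherwise an eigenfunction
`φ` has `(φ²)'' = 2 φ'² + 2 (W - ω) φ² ≥ 0`, so `φ²` is convex, and a convex integrable function
on `ℝ` is `≤ 0`, forcing `φ = 0`. For `W = (Bx - k)² + V₀`, the infimum of `W` tends to `+∞` as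
`|k| → ∞`: where `|x|` is large `V₀` is large, and where `|x|` is bounded `(Bx - k)²` is large.
-/

theorem ConvexOn.nonpos_of_integrable {f : ℝ → ℝ} (hf : ConvexOn ℝ Set.univ f)
    (hint : Integrable f) (x₀ : ℝ) : f x₀ ≤ 0 := by
  by_contra! hpos
  -- `t ↦ f (x₀ - t) + f (x₀ + t)` is integrable on `ℝ` but bounded below by `2 f x₀ > 0`
  have hmid : ∀ t, 2 * f x₀ ≤ f (x₀ - t) + f (x₀ + t) := fun t => by
    have := hf.2 (Set.mem_univ (x₀ - t)) (Set.mem_univ (x₀ + t))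
      (show (0 : ℝ) ≤ 1 / 2 by norm_num) (show (0 : ℝ) ≤ 1 / 2 by norm_num) (by norm_num)
    simp only [smul_eq_mul] at this
    ring_nf at this ⊢
    linarith
  have hconst : Integrable fun _ : ℝ => 2 * f x₀ :=
    ((hint.comp_sub_left x₀).add (hint.comp_add_left x₀)).mono' aestronglyMeasurable_const
      (ae_of_all _ fun t => by rw [Real.norm_eq_abs, abs_of_pos (by positivity)]; exact hmid t)
  rcases integrable_const_iff.mp hconst with h | h
  · linarith
  · exact measure_ne_top volume Set.univ Real.volume_univ

theorem convexOn_sq_of_schrodinger {φ W : ℝ → ℝ} {ω : ℝ} (hφ : ContDiff ℝ 2 φ)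
    (hode : ∀ x, -deriv (deriv φ) x + W x * φ x = ω * φ x) (hW : ∀ x, ω ≤ W x) :
    ConvexOn ℝ Set.univ fun x => φ x ^ 2 := by
  have hφ' : Differentiable ℝ φ := hφ.differentiable (by norm_num)
  have hφ'' : Differentiable ℝ (deriv φ) :=
    (contDiff_succ_iff_deriv.mp (show ContDiff ℝ (1 + 1) φ from hφ)).2.2.differentiable
      one_ne_zero
  refine convexOn_of_hasDerivWithinAt2_nonneg convex_univ
    (f' := fun x => 2 * φ x * deriv φ x)
    (f'' := fun x => 2 * deriv φ x ^ 2 + 2 * φ x * deriv (deriv φ) x)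
    (hφ'.continuous.pow 2).continuousOn
    (fun x _ => ?_) (fun x _ => ?_) (fun x _ => ?_)
  · simpa using (hφ' x).hasDerivAt.fun_pow 2
  · exact ((((hφ' x).hasDerivAt.const_mul 2).mul (hφ'' x).hasDerivAt).congr_deriv
      (by ring)).hasDerivWithinAt
  · have hsecond : deriv (deriv φ) x = (W x - ω) * φ x := by linarith [hode x]
    have hWx : 0 ≤ W x - ω := sub_nonneg.mpr (hW x)
    rw [hsecond]
    nlinarith [sq_nonneg (deriv φ x), mul_nonneg hWx (sq_nonneg (φ x))]

theorem exists_lt_of_schrodinger_eigenfunction {φ W : ℝ → ℝ} {ω : ℝ} (hφ : ContDiff ℝ 2 φ)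
    (hne : φ ≠ 0) (hint : Integrable fun x => φ x ^ 2)
    (hode : ∀ x, -deriv (deriv φ) x + W x * φ x = ω * φ x) : ∃ x, W x < ω := by
  by_contra! hW
  refine hne (funext fun x => ?_)
  have := ((convexOn_sq_of_schrodinger hφ hode hW).nonpos_of_integrable hint x)
  exact pow_eq_zero_iff two_ne_zero |>.mp (le_antisymm this (sq_nonneg _))

theorem IsEigenvalue.exists_lt {B : ℝ} {V₀ : ℝ → ℝ} {k ω : ℝ} (h : IsEigenvalue B V₀ k ω) :
    ∃ x, (B * x - k) ^ 2 + V₀ x < ω :=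
  let ⟨_, hφ, hne, hint, hode⟩ := h
  exists_lt_of_schrodinger_eigenfunction hφ hne hint hode

theorem eventually_le_shifted_potential {V₀ : ℝ → ℝ} (B : ℝ) (hV : ∀ x, 0 ≤ V₀ x)
    (hVlim : Tendsto V₀ (cocompact ℝ) atTop) (M : ℝ) :
    ∀ᶠ k in cocompact ℝ, ∀ x, M ≤ (B * x - k) ^ 2 + V₀ x := by
  obtain ⟨R, hR⟩ : ∃ R, ∀ x, R ≤ |x| → M ≤ V₀ x := by
    have := hVlim.eventually_ge_atTop M
    rw [← Metric.cobounded_eq_cocompact, ← comap_norm_atTop, eventually_comap,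
      eventually_atTop] at this
    obtain ⟨R, hR⟩ := this
    exact ⟨R, fun x hx => hR _ hx x rfl⟩
  filter_upwards [tendsto_norm_cocompact_atTop.eventually_ge_atTop (|B| * |R| + |M| + 1)]
    with k hk x
  rcases le_or_gt R |x| with hx | hx
  · nlinarith [hR x hx, sq_nonneg (B * x - k)]
  · have hBx : |B * x| ≤ |B| * |R| := by
      rw [abs_mul]
      exact mul_le_mul_of_nonneg_left (hx.le.trans (le_abs_self R)) (abs_nonneg B)
    have hfar : |M| + 1 ≤ |B * x - k| := by
      rw [Real.norm_eq_abs] at hk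
      linarith [abs_sub_abs_le_abs_sub k (B * x), abs_sub_comm k (B * x)]
    nlinarith [sq_abs (B * x - k), le_abs_self M, abs_nonneg M, hV x]

theorem dispersion_curve_limit_unbounded_general (B : ℝ) (V₀ : ℝ → ℝ)
    (hVnonneg : ∀ x, 0 ≤ V₀ x)
    (hVlim : Tendsto V₀ (cocompact ℝ) atTop)
    (ω : ℕ → ℝ → ℝ)
    (heig : ∀ j k, IsEigenvalue B V₀ k (ω j k))
    (j : ℕ) :
    Tendsto (fun k => ω j k) (cocompact ℝ) atTop := by
  refine tendsto_atTop.mpr fun M => ?_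
  filter_upwards [eventually_le_shifted_potential B hVnonneg hVlim M] with k hk
  obtain ⟨x, hx⟩ := (heig j k).exists_lt
  linarith [hk x]

/-- If `V₀ ≥ 0` and `V₀(x) → +∞` as `|x| → ∞`, then each dispersion curve of
`h₀(k)` satisfies `ω_j(k) → +∞` as `|k| → ∞`. -/
theorem dispersion_curve_limit_unbounded (B : ℝ) (hB : 0 < B) (V₀ : ℝ → ℝ)
    (hVnonneg : ∀ x, 0 ≤ V₀ x)
    (hVlim : Tendsto V₀ (cocompact ℝ) atTop)
    (ω : ℕ → ℝ → ℝ)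
    (hmono : ∀ k, StrictMono (fun j => ω j k))
    (heig : ∀ j k, IsEigenvalue B V₀ k (ω j k))
    (hexh : ∀ k e, IsEigenvalue B V₀ k e → ∃ j, e = ω j k)
    (j : ℕ) :
    Tendsto (fun k => ω j k) (cocompact ℝ) atTop :=
  dispersion_curve_limit_unbounded_general B V₀ hVnonneg hVlim ω heig j
end

section
/- Parabolic channel edge current lower bound: let ψ = Σ_{j=0}^n ∫ χ_{ω_j⁻¹(Δ_n)} β_j(k) e^{iky} φ_j(x;k) dk/√(2π) be a normalized state with energy in Δ_n = [(2n+a)B_g,(2n+c)B_g], and suppose |β_j(k)|² ≥ (1+γ²)|β_j(-k)|² for all k ∈ ω_j⁻¹(Δ_n)∩ℝ₋ and 0 ≤ j ≤ n, for some γ > 0. Then -⟨ψ, (p_y - Bx)ψ⟩ ≥ (γ²/(2+γ²)) √(a-1) · g/√(B_g). -/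
open MeasureTheory

private lemma setIntegral_neg_change (f : ℝ → ℝ) (s : Set ℝ) :
    ∫ k in s, f k = ∫ k in (Neg.neg ⁻¹' s : Set ℝ), f (-k) := by
  have h1 : Measure.map Neg.neg (volume : Measure ℝ) = volume :=
    (Measure.measurePreserving_neg _).map_eq
  conv_lhs => rw [← h1]
  exact (Homeomorph.neg ℝ).measurableEmbedding.setIntegral_map f s

set_option maxHeartbeats 1000000 in
/-- Parabolic channel edge current lower bound: for a normalized state with energy in
`Δ_n = [(2n+a)B_g, (2n+c)B_g]` whose Fourier coefficients `β_j` are concentrated on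
negative wave numbers (`|β_j(k)|² ≥ (1+γ²)|β_j(-k)|²` there), the edge current
`⟨ψ, V_y ψ⟩ = (1/2)Σ_j ∫_{ω_j⁻¹(Δ_n)₋}(|β_j(k)|²-|β_j(-k)|²)ω_j'(k)dk` satisfies
`-⟨ψ, V_y ψ⟩ ≥ (γ²/(2+γ²))√(a-1) · g/√B_g`. -/
theorem parabolic_edge_current_lower_bound (B g a c γ : ℝ) (n : ℕ)
    (hB : 0 < B) (hg : 0 < g) (hγ : 0 < γ) (ha : 1 < a) (hac : a < c) (hc : c < 3)
    (Bg : ℝ) (hBg : Bg = Real.sqrt (B ^ 2 + g ^ 2))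
    (ω : ℕ → ℝ → ℝ)
    (hω : ∀ i k, ω i k = (2 * (i : ℝ) + 1) * Bg + (g / Bg) ^ 2 * k ^ 2)
    (β : ℕ → ℝ → ℂ)
    (hnorm : ∑ j ∈ Finset.range (n + 1),
        ∫ k in {k : ℝ | ω j k ∈ Set.Icc ((2 * (n : ℝ) + a) * Bg)
          ((2 * (n : ℝ) + c) * Bg)}, ‖β j k‖ ^ 2 = 1)
    (hβ : ∀ j ≤ n, ∀ k ∈ {k : ℝ | ω j k ∈ Set.Icc ((2 * (n : ℝ) + a) * Bg)
          ((2 * (n : ℝ) + c) * Bg)} ∩ Set.Iic 0,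
        (1 + γ ^ 2) * ‖β j (-k)‖ ^ 2 ≤ ‖β j k‖ ^ 2) :
    (γ ^ 2 / (2 + γ ^ 2)) * Real.sqrt (a - 1) * (g / Real.sqrt Bg)
      ≤ -((1 / 2) * ∑ j ∈ Finset.range (n + 1),
          ∫ k in {k : ℝ | ω j k ∈ Set.Icc ((2 * (n : ℝ) + a) * Bg)
            ((2 * (n : ℝ) + c) * Bg)} ∩ Set.Iic 0,
            (‖β j k‖ ^ 2 - ‖β j (-k)‖ ^ 2) * deriv (ω j) k) := by
  have hBg0 : 0 < Bg := by
    rw [hBg]; exact Real.sqrt_pos.mpr (by positivity)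
  set L := (2 * (n : ℝ) + a) * Bg with hL
  set U := (2 * (n : ℝ) + c) * Bg with hU
  set m := (g / Bg) ^ 2 with hm
  have hm0 : 0 < m := by positivity
  have ha1 : (0:ℝ) < a - 1 := by linarith
  set C := g * Real.sqrt (a - 1) / Real.sqrt Bg with hCdef
  have hC0 : 0 < C :=
    div_pos (mul_pos hg (Real.sqrt_pos.mpr ha1)) (Real.sqrt_pos.mpr hBg0)
  have hγ2 : (0:ℝ) < 1 + γ ^ 2 := by positivity
  have hγ2' : (0:ℝ) < 2 + γ ^ 2 := by positivity
  set K := C * ((1 + γ ^ 2) / (2 + γ ^ 2)) * (γ ^ 2 / (1 + γ ^ 2)) with hK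
  have hK0 : 0 < K := by positivity
  have hωfun : ∀ j : ℕ, ω j = fun k => (2 * (j:ℝ) + 1) * Bg + m * k ^ 2 :=
    fun j => funext fun k => hω j k
  have hωcont : ∀ j : ℕ, Continuous (ω j) := by
    intro j; rw [hωfun j]; continuity
  have hderiv : ∀ (j : ℕ) (k : ℝ), deriv (ω j) k = m * (2 * k) := by
    intro j k
    rw [hωfun j]
    have h : HasDerivAt (fun k : ℝ => (2 * (j:ℝ) + 1) * Bg + m * k ^ 2)
        (m * (2 * k)) k := by
      have h := ((hasDerivAt_pow 2 k).const_mul m).const_add ((2 * (j:ℝ) + 1) * Bg)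
      simpa [mul_comm] using h
    exact h.deriv
  -- the per-channel estimate
  have key : ∀ j ∈ Finset.range (n + 1),
      K * ∫ k in {k : ℝ | ω j k ∈ Set.Icc L U}, ‖β j k‖ ^ 2
        ≤ -((1/2) * ∫ k in {k : ℝ | ω j k ∈ Set.Icc L U} ∩ Set.Iic 0,
            (‖β j k‖ ^ 2 - ‖β j (-k)‖ ^ 2) * deriv (ω j) k) := by
    intro j hj
    have hjn : j ≤ n := Nat.lt_succ_iff.mp (Finset.mem_range.mp hj)
    set s := {k : ℝ | ω j k ∈ Set.Icc L U} with hs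
    have hsmeas : MeasurableSet s := (hωcont j).measurable measurableSet_Icc
    have hAmeas : MeasurableSet (s ∩ Set.Iic 0) := hsmeas.inter measurableSet_Iic
    have hneg : Neg.neg ⁻¹' s = s := by
      ext k
      simp [hs, hω, neg_sq]
    -- pointwise bounds on the negative part
    have hCk : ∀ k ∈ s ∩ Set.Iic 0, C ≤ m * (-k) := by
      rintro k ⟨hks, hk0⟩
      have hωL : L ≤ ω j k := (hks : ω j k ∈ Set.Icc L U).1
      have hjr : (j : ℝ) ≤ (n : ℝ) := Nat.cast_le.mpr hjn
      have h2 : (a - 1) * Bg ≤ m * k ^ 2 := by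
        have he : m * k ^ 2 = ω j k - (2 * (j:ℝ) + 1) * Bg := by rw [hω]; ring
        rw [he]
        rw [hL] at hωL
        nlinarith
      have hmk0 : 0 ≤ m * (-k) := by
        have hkn : 0 ≤ -k := by simpa using Set.mem_Iic.mp hk0
        positivity
      have hC2 : C ^ 2 = m * ((a - 1) * Bg) := by
        rw [hCdef, hm]
        rw [div_pow, mul_pow, Real.sq_sqrt ha1.le, Real.sq_sqrt hBg0.le, div_pow]
        field_simp
      have h1 : C ^ 2 ≤ (m * (-k)) ^ 2 := by
        rw [hC2]
        have he : (m * (-k)) ^ 2 = m * (m * k ^ 2) := by ring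
        rw [he]
        exact mul_le_mul_of_nonneg_left h2 hm0.le
      have h3 := Real.sqrt_le_sqrt h1
      rwa [Real.sqrt_sq hC0.le, Real.sqrt_sq hmk0] at h3
    have hD : ∀ k ∈ s ∩ Set.Iic 0,
        γ ^ 2 / (1 + γ ^ 2) * ‖β j k‖ ^ 2 ≤ ‖β j k‖ ^ 2 - ‖β j (-k)‖ ^ 2 := by
      intro k hk
      have hb := hβ j hjn k hk
      have h1 : ‖β j (-k)‖ ^ 2 ≤ ‖β j k‖ ^ 2 / (1 + γ ^ 2) :=
        (le_div_iff₀ hγ2).mpr (by linarith)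
      have h2 : γ ^ 2 / (1 + γ ^ 2) * ‖β j k‖ ^ 2
          = ‖β j k‖ ^ 2 - ‖β j k‖ ^ 2 / (1 + γ ^ 2) := by
        field_simp
        ring
      rw [h2]
      linarith
    have hDpos : ∀ k ∈ s ∩ Set.Iic 0, 0 ≤ ‖β j k‖ ^ 2 - ‖β j (-k)‖ ^ 2 := by
      intro k hk
      refine le_trans ?_ (hD k hk)
      positivity
    have hpt : ∀ k ∈ s ∩ Set.Iic 0,
        2 * C * (γ ^ 2 / (1 + γ ^ 2)) * ‖β j k‖ ^ 2
          ≤ -((‖β j k‖ ^ 2 - ‖β j (-k)‖ ^ 2) * deriv (ω j) k) := by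
      intro k hk
      rw [hderiv]
      have e : -((‖β j k‖ ^ 2 - ‖β j (-k)‖ ^ 2) * (m * (2 * k)))
          = (‖β j k‖ ^ 2 - ‖β j (-k)‖ ^ 2) * (2 * (m * (-k))) := by ring
      rw [e]
      calc 2 * C * (γ ^ 2 / (1 + γ ^ 2)) * ‖β j k‖ ^ 2
          = (γ ^ 2 / (1 + γ ^ 2) * ‖β j k‖ ^ 2) * (2 * C) := by ring
        _ ≤ (‖β j k‖ ^ 2 - ‖β j (-k)‖ ^ 2) * (2 * (m * (-k))) :=
            mul_le_mul (hD k hk) (by linarith [hCk k hk]) (by positivity)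
              (hDpos k hk)
    by_cases hI : IntegrableOn (fun k => ‖β j k‖ ^ 2) s volume
    · -- good case
      have hIA : IntegrableOn (fun k => ‖β j k‖ ^ 2) (s ∩ Set.Iic 0) volume :=
        hI.mono_set Set.inter_subset_left
      have hInegS : IntegrableOn (fun k => ‖β j (-k)‖ ^ 2) s volume := by
        have h := (MeasurePreserving.integrableOn_comp_preimage
          (Measure.measurePreserving_neg (volume : Measure ℝ))
          (Homeomorph.neg ℝ).measurableEmbedding
          (f := fun k => ‖β j k‖ ^ 2) (s := s)).2 hI
        rwa [hneg] at h
      have hInegA : IntegrableOn (fun k => ‖β j (-k)‖ ^ 2) (s ∩ Set.Iic 0) volume :=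
        hInegS.mono_set Set.inter_subset_left
      -- integrability of the current integrand on the negative part
      have hR0 : (0:ℝ) ≤ Real.sqrt ((U - Bg) / m) := Real.sqrt_nonneg _
      set R := Real.sqrt ((U - Bg) / m) with hRdef
      have hRbd : ∀ k ∈ s, |k| ≤ R := by
        intro k hks
        have hωU : ω j k ≤ U := (hks : ω j k ∈ Set.Icc L U).2
        have hk2 : k ^ 2 ≤ (U - Bg) / m := by
          rw [le_div_iff₀ hm0]
          have he : m * k ^ 2 = ω j k - (2 * (j:ℝ) + 1) * Bg := by rw [hω]; ring
          nlinarith [Nat.cast_nonneg (α := ℝ) j, hBg0]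
        have h4 := Real.sqrt_le_sqrt hk2
        rwa [Real.sqrt_sq_eq_abs] at h4
      have hIf : IntegrableOn
          (fun k => (‖β j k‖ ^ 2 - ‖β j (-k)‖ ^ 2) * deriv (ω j) k)
          (s ∩ Set.Iic 0) volume := by
        refine Integrable.mono' ((hIA.add hInegA).const_mul (2 * m * R)) ?_ ?_
        · have h1 : AEStronglyMeasurable (fun k => ‖β j k‖ ^ 2)
              (volume.restrict (s ∩ Set.Iic 0)) := hIA.aestronglyMeasurable
          have h2 : AEStronglyMeasurable (fun k => ‖β j (-k)‖ ^ 2)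
              (volume.restrict (s ∩ Set.Iic 0)) := hInegA.aestronglyMeasurable
          have hcd : (fun k => deriv (ω j) k) = fun k : ℝ => m * (2 * k) :=
            funext fun k => hderiv j k
          have h3 : AEStronglyMeasurable (fun k => deriv (ω j) k)
              (volume.restrict (s ∩ Set.Iic 0)) := by
            rw [hcd]
            exact (Continuous.aestronglyMeasurable (by continuity))
          exact (h1.sub h2).mul h3
        · refine (ae_restrict_iff' hAmeas).2 (Filter.Eventually.of_forall ?_)
          rintro k ⟨hks, hk0⟩
          rw [hderiv]
          have hkR := hRbd k hks
          have e1 : |‖β j k‖ ^ 2 - ‖β j (-k)‖ ^ 2|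
              ≤ ‖β j k‖ ^ 2 + ‖β j (-k)‖ ^ 2 := by
            rw [abs_le]
            constructor <;> nlinarith [sq_nonneg ‖β j k‖, sq_nonneg ‖β j (-k)‖]
          have e2 : |m * (2 * k)| ≤ 2 * m * R := by
            rw [abs_mul, abs_mul, abs_of_nonneg hm0.le, abs_two]
            nlinarith [abs_nonneg k]
          have : ‖(‖β j k‖ ^ 2 - ‖β j (-k)‖ ^ 2) * (m * (2 * k))‖
              = |‖β j k‖ ^ 2 - ‖β j (-k)‖ ^ 2| * |m * (2 * k)| := by
            rw [Real.norm_eq_abs, abs_mul]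
          rw [this]
          calc |‖β j k‖ ^ 2 - ‖β j (-k)‖ ^ 2| * |m * (2 * k)|
              ≤ (‖β j k‖ ^ 2 + ‖β j (-k)‖ ^ 2) * (2 * m * R) :=
                mul_le_mul e1 e2 (abs_nonneg _) (by positivity)
            _ = 2 * m * R * (‖β j k‖ ^ 2 + ‖β j (-k)‖ ^ 2) := by ring
      -- the monotone integral estimate on the negative part
      have hmono : 2 * C * (γ ^ 2 / (1 + γ ^ 2))
            * ∫ k in s ∩ Set.Iic 0, ‖β j k‖ ^ 2
          ≤ -∫ k in s ∩ Set.Iic 0,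
              (‖β j k‖ ^ 2 - ‖β j (-k)‖ ^ 2) * deriv (ω j) k := by
        have h5 := setIntegral_mono_on
          (f := fun k => 2 * C * (γ ^ 2 / (1 + γ ^ 2)) * ‖β j k‖ ^ 2)
          (g := fun k => -((‖β j k‖ ^ 2 - ‖β j (-k)‖ ^ 2) * deriv (ω j) k))
          (hIA.const_mul _) hIf.neg hAmeas hpt
        simp only [integral_const_mul, integral_neg] at h5
        exact h5
      -- relate full integral to the negative part
      have hsym : ∫ k in s ∩ Set.Ici 0, ‖β j k‖ ^ 2
          = ∫ k in s ∩ Set.Iic 0, ‖β j (-k)‖ ^ 2 := by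
        have hpre : (Neg.neg ⁻¹' (s ∩ Set.Ici 0) : Set ℝ) = s ∩ Set.Iic 0 := by
          rw [Set.preimage_inter, hneg]
          congr 1
          ext k
          simp
        rw [setIntegral_neg_change (fun k => ‖β j k‖ ^ 2) (s ∩ Set.Ici 0), hpre]
      have hhalf : ∫ k in s ∩ Set.Iic 0, ‖β j (-k)‖ ^ 2
          ≤ (1 / (1 + γ ^ 2)) * ∫ k in s ∩ Set.Iic 0, ‖β j k‖ ^ 2 := by
        have h6 := setIntegral_mono_on
          (f := fun k => ‖β j (-k)‖ ^ 2)
          (g := fun k => (1 / (1 + γ ^ 2)) * ‖β j k‖ ^ 2)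
          hInegA (hIA.const_mul _) hAmeas ?_
        · simpa only [integral_const_mul] using h6
        · intro k hk
          have hb := hβ j hjn k hk
          show ‖β j (-k)‖ ^ 2 ≤ 1 / (1 + γ ^ 2) * ‖β j k‖ ^ 2
          rw [div_mul_eq_mul_div, one_mul, le_div_iff₀ hγ2]
          linarith
      have hsplit : ∫ k in s, ‖β j k‖ ^ 2
          = (∫ k in s ∩ Set.Iic 0, ‖β j k‖ ^ 2)
            + ∫ k in s ∩ Set.Ioi 0, ‖β j k‖ ^ 2 := by
        have hun := setIntegral_union
          (Set.disjoint_of_subset Set.inter_subset_right Set.inter_subset_right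
            (Set.Iic_disjoint_Ioi le_rfl))
          (hsmeas.inter measurableSet_Ioi)
          hIA (hI.mono_set Set.inter_subset_left)
          (f := fun k => ‖β j k‖ ^ 2) (μ := volume)
        have hu : (s ∩ Set.Iic 0) ∪ (s ∩ Set.Ioi 0) = s := by
          rw [← Set.inter_union_distrib_left, Set.Iic_union_Ioi, Set.inter_univ]
        rwa [hu] at hun
      have hIoiIci : ∫ k in s ∩ Set.Ioi 0, ‖β j k‖ ^ 2
          = ∫ k in s ∩ Set.Ici 0, ‖β j k‖ ^ 2 :=
        setIntegral_congr_set (ae_eq_set_inter (ae_eq_refl s) Ioi_ae_eq_Ici)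
      have hfull : ∫ k in s, ‖β j k‖ ^ 2
          ≤ (1 + 1 / (1 + γ ^ 2)) * ∫ k in s ∩ Set.Iic 0, ‖β j k‖ ^ 2 := by
        rw [hsplit, hIoiIci, hsym]
        linarith [hhalf]
      -- combine
      have hNpos : 0 ≤ ∫ k in s ∩ Set.Iic 0, ‖β j k‖ ^ 2 :=
        setIntegral_nonneg hAmeas (fun k _ => by positivity)
      calc K * ∫ k in s, ‖β j k‖ ^ 2
          ≤ K * ((1 + 1 / (1 + γ ^ 2)) * ∫ k in s ∩ Set.Iic 0, ‖β j k‖ ^ 2) :=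
            mul_le_mul_of_nonneg_left hfull hK0.le
        _ = (1/2) * (2 * C * (γ ^ 2 / (1 + γ ^ 2))
              * ∫ k in s ∩ Set.Iic 0, ‖β j k‖ ^ 2) := by
            rw [hK]
            field_simp
            ring
        _ ≤ (1/2) * (-∫ k in s ∩ Set.Iic 0,
              (‖β j k‖ ^ 2 - ‖β j (-k)‖ ^ 2) * deriv (ω j) k) := by
            linarith [hmono]
        _ = -((1/2) * ∫ k in s ∩ Set.Iic 0,
              (‖β j k‖ ^ 2 - ‖β j (-k)‖ ^ 2) * deriv (ω j) k) := by ring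
    · -- bad case : the norm integral over s vanishes
      have hzero : ∫ k in s, ‖β j k‖ ^ 2 = 0 := integral_undef hI
      rw [hzero, mul_zero, le_neg, neg_zero]
      have h7 : ∫ k in s ∩ Set.Iic 0,
          (‖β j k‖ ^ 2 - ‖β j (-k)‖ ^ 2) * deriv (ω j) k ≤ 0 := by
        refine setIntegral_nonpos hAmeas ?_
        intro k hk
        rw [hderiv]
        have h1 := hDpos k hk
        have h2 : k ≤ 0 := hk.2
        have h3 : m * (2 * k) ≤ 0 := by nlinarith
        exact mul_nonpos_of_nonneg_of_nonpos h1 h3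
      linarith
  -- conclusion
  have hgoal : γ ^ 2 / (2 + γ ^ 2) * Real.sqrt (a - 1) * (g / Real.sqrt Bg)
      = K * 1 := by
    rw [hK, hCdef, mul_one]
    field_simp
  rw [hgoal]
  calc K * 1
      = ∑ j ∈ Finset.range (n + 1),
        K * ∫ k in {k : ℝ | ω j k ∈ Set.Icc L U}, ‖β j k‖ ^ 2 := by
        rw [← Finset.mul_sum, hnorm]
    _ ≤ ∑ j ∈ Finset.range (n + 1),
        -((1/2) * ∫ k in {k : ℝ | ω j k ∈ Set.Icc L U} ∩ Set.Iic 0,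
            (‖β j k‖ ^ 2 - ‖β j (-k)‖ ^ 2) * deriv (ω j) k) :=
        Finset.sum_le_sum key
    _ = -((1 / 2) * ∑ j ∈ Finset.range (n + 1),
          ∫ k in {k : ℝ | ω j k ∈ Set.Icc L U} ∩ Set.Iic 0,
            (‖β j k‖ ^ 2 - ‖β j (-k)‖ ^ 2) * deriv (ω j) k) := by
        rw [Finset.mul_sum, Finset.sum_neg_distrib]
end
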